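/- Let a, b, c : ℝ² → ℝ be C¹ functions, let ℜ be a Riemann function for the hyperbolic operator H, let s : ℝ → ℝ be a C¹ strictly decreasing bijection with graph Γ = {(x, s(x)) : x ∈ ℝ}, and let u : ℝ² → ℝ be a C² solution of Hu = u_{xy} + a uₓ + b u_y + c u = 0 on ℝ² which in addition vanishes on Γ, i.e. u(x, s(x)) = 0 for all x ∈ ℝ. Then for every point P = (x₀, y₀) ∈ ℝ², u(x₀, y₀) = ½ ∫_{s⁻¹(y₀)}^{x₀} ℜ(x, s(x); x₀, y₀) · [uₓ(x, s(x)) − u_y(x, s(x)) · s′(x)] dx. -/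

import Mathlib

/-!
Riemann's method. With `ℜ = R(·; P)`, the field `(V, W)` given by
`V = ½(ℜ u_y − u ℜ_y) + a u ℜ`, `W = ½(ℜ u_x − u ℜ_x) + b u ℜ` satisfies
`V_x + W_y = ℜ Hu − u H*ℜ = 0`. Integrating this divergence-free field over the curvilinear
triangle bounded by the characteristics through `P = (x₀, y₀)` and the arc of `Γ` between them,
the flux through each characteristic edge is `½ [u ℜ]` between its endpoints, because the Goursat
data make `ℜ_y = a ℜ` on `x = x₀` and `ℜ_x = b ℜ` on `y = y₀`; as `u = 0` on `Γ` and
`ℜ(P; P) = 1`, both edges contribute `½ u(P)`, while on `Γ` the flux reduces to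
`½ ℜ (u_x − u_y s')`.

The flux balance over the triangle comes from differentiating `x ↦ ∫_{s(x)}^{y₀} V(x, y) dy`
and replacing `V_x` by `−W_y` under the integral.
-/

/-- Partial derivative with respect to the first variable. -/
noncomputable def pdx (u : ℝ × ℝ → ℝ) (p : ℝ × ℝ) : ℝ :=
  deriv (fun x : ℝ => u (x, p.2)) p.1

/-- Partial derivative with respect to the second variable. -/
noncomputable def pdy (u : ℝ × ℝ → ℝ) (p : ℝ × ℝ) : ℝ :=
  deriv (fun y : ℝ => u (p.1, y)) p.2

open MeasureTheory Set Filter Topology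
open scoped Interval

section PartialDerivatives

variable {f : ℝ × ℝ → ℝ} {p : ℝ × ℝ}

theorem hasDerivAt_fderiv_apply_one_zero (hf : DifferentiableAt ℝ f p) :
    HasDerivAt (fun x => f (x, p.2)) (fderiv ℝ f p (1, 0)) p.1 :=
  hf.hasFDerivAt.comp_hasDerivAt p.1 ((hasDerivAt_id p.1).prodMk (hasDerivAt_const _ _))

theorem hasDerivAt_fderiv_apply_zero_one (hf : DifferentiableAt ℝ f p) :
    HasDerivAt (fun y => f (p.1, y)) (fderiv ℝ f p (0, 1)) p.2 :=
  hf.hasFDerivAt.comp_hasDerivAt p.2 ((hasDerivAt_const _ _).prodMk (hasDerivAt_id p.2))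

theorem pdx_eq_fderiv (hf : DifferentiableAt ℝ f p) : pdx f p = fderiv ℝ f p (1, 0) :=
  (hasDerivAt_fderiv_apply_one_zero hf).deriv

theorem pdy_eq_fderiv (hf : DifferentiableAt ℝ f p) : pdy f p = fderiv ℝ f p (0, 1) :=
  (hasDerivAt_fderiv_apply_zero_one hf).deriv

theorem hasDerivAt_pdx (hf : DifferentiableAt ℝ f p) :
    HasDerivAt (fun x => f (x, p.2)) (pdx f p) p.1 :=
  pdx_eq_fderiv hf ▸ hasDerivAt_fderiv_apply_one_zero hf

theorem hasDerivAt_pdy (hf : DifferentiableAt ℝ f p) :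
    HasDerivAt (fun y => f (p.1, y)) (pdy f p) p.2 :=
  pdy_eq_fderiv hf ▸ hasDerivAt_fderiv_apply_zero_one hf

theorem contDiff_pdx {m n : WithTop ℕ∞} (hf : ContDiff ℝ n f) (hmn : m + 1 ≤ n) :
    ContDiff ℝ m (pdx f) := by
  have hdiff : Differentiable ℝ f := (hf.of_le hmn).differentiable (by simp)
  rw [show pdx f = fun p => fderiv ℝ f p (1, 0) from funext fun p => pdx_eq_fderiv (hdiff p)]
  exact (hf.fderiv_right hmn).clm_apply contDiff_const

theorem contDiff_pdy {m n : WithTop ℕ∞} (hf : ContDiff ℝ n f) (hmn : m + 1 ≤ n) :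
    ContDiff ℝ m (pdy f) := by
  have hdiff : Differentiable ℝ f := (hf.of_le hmn).differentiable (by simp)
  rw [show pdy f = fun p => fderiv ℝ f p (0, 1) from funext fun p => pdy_eq_fderiv (hdiff p)]
  exact (hf.fderiv_right hmn).clm_apply contDiff_const

theorem ContDiff.continuous_pdx (hf : ContDiff ℝ 1 f) : Continuous (pdx f) :=
  (contDiff_pdx (m := 0) hf (by norm_num)).continuous

theorem ContDiff.continuous_pdy (hf : ContDiff ℝ 1 f) : Continuous (pdy f) :=
  (contDiff_pdy (m := 0) hf (by norm_num)).continuous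

theorem pdx_pdy_comm (hf : ContDiff ℝ 2 f) (p : ℝ × ℝ) : pdx (pdy f) p = pdy (pdx f) p := by
  have hdiff : Differentiable ℝ f := hf.differentiable two_ne_zero
  have hd' : Differentiable ℝ (fderiv ℝ f) :=
    (hf.fderiv_right (m := 1) (by norm_num)).differentiable one_ne_zero
  have hpdx : pdx f = fun p => fderiv ℝ f p (1, 0) := funext fun p => pdx_eq_fderiv (hdiff p)
  have hpdy : pdy f = fun p => fderiv ℝ f p (0, 1) := funext fun p => pdy_eq_fderiv (hdiff p)
  rw [hpdx, hpdy, pdx_eq_fderiv ((hd' p).clm_apply (differentiableAt_const _)),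
    pdy_eq_fderiv ((hd' p).clm_apply (differentiableAt_const _)),
    fderiv_clm_apply (hd' p) (differentiableAt_const _),
    fderiv_clm_apply (hd' p) (differentiableAt_const _)]
  simpa using (hf.contDiffAt (x := p)).isSymmSndFDerivAt (by simp) (1, 0) (0, 1)

end PartialDerivatives

section IntegralsDependingOnParameter

variable {V : ℝ × ℝ → ℝ}

theorem continuous_section_fst (hV : Continuous V) (y : ℝ) : Continuous fun x => V (x, y) :=
  hV.comp (continuous_id.prodMk continuous_const)

theorem continuous_section_snd (hV : Continuous V) (x : ℝ) : Continuous fun y => V (x, y) :=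
  hV.comp (continuous_const.prodMk continuous_id)

theorem hasFDerivAt_integral_snd (hV : Continuous V) (z c : ℝ) :
    HasFDerivAt (fun p : ℝ × ℝ => ∫ y in c..p.2, V (p.1, y))
      (V (z, c) • ContinuousLinearMap.snd ℝ ℝ ℝ) (z, c) := by
  rw [hasFDerivAt_iff_isLittleO, Asymptotics.isLittleO_iff]
  intro ε hε
  obtain ⟨δ, hδ, hVδ⟩ := Metric.continuousAt_iff.1 hV.continuousAt ε hε
  filter_upwards [Metric.ball_mem_nhds (z, c) hδ] with p hp
  have hremainder : (∫ y in c..p.2, V (p.1, y)) - (∫ y in c..c, V (z, y))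
      - (V (z, c) • ContinuousLinearMap.snd ℝ ℝ ℝ) (p - (z, c))
      = ∫ y in c..p.2, (V (p.1, y) - V (z, c)) := by
    rw [intervalIntegral.integral_sub ((continuous_section_snd hV p.1).intervalIntegrable _ _)
      intervalIntegrable_const]
    simp [mul_comm]
  have hclose : ∀ y ∈ Ι c p.2, ‖V (p.1, y) - V (z, c)‖ ≤ ε := by
    intro y hy
    have hyc : dist y c ≤ dist p.2 c := by
      rw [dist_comm y, dist_comm p.2]; exact Real.dist_left_le_of_mem_uIcc (uIoc_subset_uIcc hy)
    refine (hVδ (lt_of_le_of_lt ?_ hp)).le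
    rw [Prod.dist_eq, Prod.dist_eq]
    exact max_le_max le_rfl hyc
  calc ‖(∫ y in c..p.2, V (p.1, y)) - (∫ y in c..c, V (z, y))
        - (V (z, c) • ContinuousLinearMap.snd ℝ ℝ ℝ) (p - (z, c))‖
      = ‖∫ y in c..p.2, (V (p.1, y) - V (z, c))‖ := by rw [hremainder]
    _ ≤ ε * |p.2 - c| := intervalIntegral.norm_integral_le_of_norm_le_const hclose
    _ ≤ ε * ‖p - (z, c)‖ := by
      gcongr
      simpa using norm_snd_le (p - (z, c))

theorem hasDerivAt_integral_of_contDiff (hV : ContDiff ℝ 1 V) (α β z : ℝ) :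
    HasDerivAt (fun x => ∫ y in α..β, V (x, y)) (∫ y in α..β, pdx V (z, y)) z := by
  obtain ⟨C, hC⟩ :=
    (isCompact_Icc.prod (isCompact_uIcc (a := α) (b := β))).exists_bound_of_continuousOn
    (hV.continuous_pdx.continuousOn (s := Icc (z - 1) (z + 1) ×ˢ [[α, β]]))
  refine (intervalIntegral.hasDerivAt_integral_of_dominated_loc_of_deriv_le
    (F' := fun x y => pdx V (x, y)) (bound := fun _ => C) (Metric.ball_mem_nhds z one_pos)
    (Eventually.of_forall fun x => (continuous_section_snd hV.continuous x).aestronglyMeasurable)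
    ((continuous_section_snd hV.continuous z).intervalIntegrable _ _)
    (continuous_section_snd hV.continuous_pdx z).aestronglyMeasurable
    (ae_of_all _ fun y hy x hx => hC (x, y) ⟨?_, uIoc_subset_uIcc hy⟩) intervalIntegrable_const
    (ae_of_all _ fun y _ x _ => hasDerivAt_pdx (p := (x, y))
      ((hV.differentiable one_ne_zero) _))).2
  rw [Metric.mem_ball, Real.dist_eq, abs_sub_lt_iff] at hx
  constructor <;> linarith

theorem hasDerivAt_integral_from_graph (hV : ContDiff ℝ 1 V) {s : ℝ → ℝ} {z : ℝ}
    (hs : DifferentiableAt ℝ s z) (y₀ : ℝ) :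
    HasDerivAt (fun x => ∫ y in s x..y₀, V (x, y))
      ((∫ y in s z..y₀, pdx V (z, y)) - V (z, s z) * deriv s z) z := by
  have hmoving : HasDerivAt (fun x => ∫ y in s z..s x, V (x, y)) (V (z, s z) * deriv s z) z := by
    simpa [Function.comp_def] using
      (hasFDerivAt_integral_snd hV.continuous z (s z)).comp_hasDerivAt z
      ((hasDerivAt_id z).prodMk hs.hasDerivAt)
  have hsplit : (fun x => ∫ y in s x..y₀, V (x, y))
      = fun x => (∫ y in s z..y₀, V (x, y)) - ∫ y in s z..s x, V (x, y) := by
    funext x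
    have hint := (continuous_section_snd hV.continuous x).intervalIntegrable (μ := volume)
    rw [← intervalIntegral.integral_add_adjacent_intervals (hint (s z) (s x)) (hint (s x) y₀)]
    ring
  rw [hsplit]
  exact (hasDerivAt_integral_of_contDiff hV _ _ z).sub hmoving

end IntegralsDependingOnParameter

theorem integral_edges_eq_integral_graph_of_divergence_free {V W : ℝ × ℝ → ℝ}
    (hV : ContDiff ℝ 1 V) (hW : ContDiff ℝ 1 W) (hdiv : ∀ q, pdx V q + pdy W q = 0)
    {s : ℝ → ℝ} (hs : ContDiff ℝ 1 s) {x₀ x₁ y₀ : ℝ} (hx₁ : s x₁ = y₀) :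
    (∫ y in s x₀..y₀, V (x₀, y)) + ∫ x in x₁..x₀, W (x, y₀)
      = ∫ x in x₁..x₀, (W (x, s x) - V (x, s x) * deriv s x) := by
  have hderiv (z : ℝ) : HasDerivAt (fun x => ∫ y in s x..y₀, V (x, y))
      (W (z, s z) - W (z, y₀) - V (z, s z) * deriv s z) z := by
    have hW_section : ∫ y in s z..y₀, pdy W (z, y) = W (z, y₀) - W (z, s z) :=
      intervalIntegral.integral_eq_sub_of_hasDerivAt (f := fun y => W (z, y))
        (fun y _ => hasDerivAt_pdy (p := (z, y)) (hW.differentiable one_ne_zero _))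
        ((continuous_section_snd hW.continuous_pdy z).intervalIntegrable _ _)
    have hV_section : ∫ y in s z..y₀, pdx V (z, y) = W (z, s z) - W (z, y₀) := by
      simp_rw [eq_neg_of_add_eq_zero_left (hdiv _), intervalIntegral.integral_neg, hW_section,
        neg_sub]
    simpa [hV_section] using
      hasDerivAt_integral_from_graph hV (hs.differentiable one_ne_zero z) y₀
  have hVc := hV.continuous
  have hWc := hW.continuous
  have hsc := hs.continuous
  have hs'c := hs.continuous_deriv le_rfl
  have hftc := intervalIntegral.integral_eq_sub_of_hasDerivAt (a := x₁) (b := x₀)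
    (fun z _ => hderiv z) (Continuous.intervalIntegrable (by fun_prop) _ _)
  have hsplit : ∫ x in x₁..x₀, (W (x, s x) - V (x, s x) * deriv s x)
      = (∫ x in x₁..x₀, (W (x, s x) - W (x, y₀) - V (x, s x) * deriv s x))
        + ∫ x in x₁..x₀, W (x, y₀) := by
    rw [← intervalIntegral.integral_add (Continuous.intervalIntegrable (by fun_prop) _ _)
      (Continuous.intervalIntegrable (by fun_prop) _ _)]
    ring_nf
  rw [hsplit, hftc, hx₁, intervalIntegral.integral_same, sub_zero]

section LineIntegrals

variable {f g : ℝ × ℝ → ℝ}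

theorem integral_pdx_mul_add_mul_pdx (hf : ContDiff ℝ 1 f) (hg : ContDiff ℝ 1 g)
    (x₁ x₂ y : ℝ) :
    ∫ x in x₁..x₂, (pdx f (x, y) * g (x, y) + f (x, y) * pdx g (x, y))
      = f (x₂, y) * g (x₂, y) - f (x₁, y) * g (x₁, y) :=
  intervalIntegral.integral_deriv_mul_eq_sub (u := fun x => f (x, y)) (v := fun x => g (x, y))
    (fun x _ => hasDerivAt_pdx (p := (x, y)) ((hf.differentiable one_ne_zero) _))
    (fun x _ => hasDerivAt_pdx (p := (x, y)) ((hg.differentiable one_ne_zero) _))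
    ((continuous_section_fst hf.continuous_pdx y).intervalIntegrable _ _)
    ((continuous_section_fst hg.continuous_pdx y).intervalIntegrable _ _)

theorem integral_pdy_mul_add_mul_pdy (hf : ContDiff ℝ 1 f) (hg : ContDiff ℝ 1 g)
    (x y₁ y₂ : ℝ) :
    ∫ y in y₁..y₂, (pdy f (x, y) * g (x, y) + f (x, y) * pdy g (x, y))
      = f (x, y₂) * g (x, y₂) - f (x, y₁) * g (x, y₁) :=
  intervalIntegral.integral_deriv_mul_eq_sub (u := fun y => f (x, y)) (v := fun y => g (x, y))
    (fun y _ => hasDerivAt_pdy (p := (x, y)) ((hf.differentiable one_ne_zero) _))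
    (fun y _ => hasDerivAt_pdy (p := (x, y)) ((hg.differentiable one_ne_zero) _))
    ((continuous_section_snd hf.continuous_pdy x).intervalIntegrable _ _)
    ((continuous_section_snd hg.continuous_pdy x).intervalIntegrable _ _)

theorem pdx_eq_mul_of_eq_exp_integral {b : ℝ × ℝ → ℝ} (hb : Continuous b) {x₀ y₀ : ℝ}
    (hf : ∀ x, f (x, y₀) = Real.exp (∫ t in x₀..x, b (t, y₀))) (x : ℝ) :
    pdx f (x, y₀) = b (x, y₀) * f (x, y₀) := by
  change deriv (fun x => f (x, y₀)) x = _
  rw [funext hf,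
    ((continuous_section_fst hb y₀).integral_hasStrictDerivAt x₀ x).hasDerivAt.exp.deriv, hf]
  ring

theorem pdy_eq_mul_of_eq_exp_integral {a : ℝ × ℝ → ℝ} (ha : Continuous a) {x₀ y₀ : ℝ}
    (hf : ∀ y, f (x₀, y) = Real.exp (∫ τ in y₀..y, a (x₀, τ))) (y : ℝ) :
    pdy f (x₀, y) = a (x₀, y) * f (x₀, y) := by
  change deriv (fun y => f (x₀, y)) y = _
  rw [funext hf,
    ((continuous_section_snd ha x₀).integral_hasStrictDerivAt y₀ y).hasDerivAt.exp.deriv, hf]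
  ring

end LineIntegrals

section RiemannMethod

variable (a b c : ℝ × ℝ → ℝ)

noncomputable def hyperbolicOp (u : ℝ × ℝ → ℝ) (q : ℝ × ℝ) : ℝ :=
  pdy (pdx u) q + a q * pdx u q + b q * pdy u q + c q * u q

noncomputable def hyperbolicOpAdjoint (v : ℝ × ℝ → ℝ) (q : ℝ × ℝ) : ℝ :=
  pdy (pdx v) q - pdx (fun q' => a q' * v q') q - pdy (fun q' => b q' * v q') q + c q * v q

noncomputable def riemannFluxX (u R : ℝ × ℝ → ℝ) (q : ℝ × ℝ) : ℝ :=
  (1 / 2) * (R q * pdy u q - u q * pdy R q) + a q * (u q * R q)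

noncomputable def riemannFluxY (u R : ℝ × ℝ → ℝ) (q : ℝ × ℝ) : ℝ :=
  (1 / 2) * (R q * pdx u q - u q * pdx R q) + b q * (u q * R q)

variable {a b} {u R : ℝ × ℝ → ℝ}

theorem contDiff_riemannFluxX (ha : ContDiff ℝ 1 a) (hu : ContDiff ℝ 2 u)
    (hR : ContDiff ℝ 2 R) :
    ContDiff ℝ 1 (riemannFluxX a u R) := by
  have hu_y := contDiff_pdy (m := 1) hu (by norm_num)
  have hR_y := contDiff_pdy (m := 1) hR (by norm_num)
  have hu₁ := hu.of_le one_le_two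
  have hR₁ := hR.of_le one_le_two
  unfold riemannFluxX
  fun_prop

theorem contDiff_riemannFluxY (hb : ContDiff ℝ 1 b) (hu : ContDiff ℝ 2 u)
    (hR : ContDiff ℝ 2 R) :
    ContDiff ℝ 1 (riemannFluxY b u R) := by
  have hu_x := contDiff_pdx (m := 1) hu (by norm_num)
  have hR_x := contDiff_pdx (m := 1) hR (by norm_num)
  have hu₁ := hu.of_le one_le_two
  have hR₁ := hR.of_le one_le_two
  unfold riemannFluxY
  fun_prop

theorem pdx_riemannFluxX_add_pdy_riemannFluxY (ha : Differentiable ℝ a)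
    (hb : Differentiable ℝ b) (hu : ContDiff ℝ 2 u) (hR : ContDiff ℝ 2 R) (q : ℝ × ℝ) :
    pdx (riemannFluxX a u R) q + pdy (riemannFluxY b u R) q
      = R q * hyperbolicOp a b c u q - u q * hyperbolicOpAdjoint a b c R q := by
  have hu₁ := hu.differentiable two_ne_zero
  have hR₁ := hR.differentiable two_ne_zero
  have hu_x := (contDiff_pdx (m := 1) hu (by norm_num)).differentiable one_ne_zero
  have hu_y := (contDiff_pdy (m := 1) hu (by norm_num)).differentiable one_ne_zero
  have hR_x := (contDiff_pdx (m := 1) hR (by norm_num)).differentiable one_ne_zero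
  have hR_y := (contDiff_pdy (m := 1) hR (by norm_num)).differentiable one_ne_zero
  have hV : pdx (riemannFluxX a u R) q
      = (1 / 2) * ((pdx R q * pdy u q + R q * pdx (pdy u) q)
          - (pdx u q * pdy R q + u q * pdx (pdy R) q))
        + (pdx a q * (u q * R q) + a q * (pdx u q * R q + u q * pdx R q)) :=
    (((((hasDerivAt_pdx (hR₁ q)).mul (hasDerivAt_pdx (hu_y q))).sub
      ((hasDerivAt_pdx (hu₁ q)).mul (hasDerivAt_pdx (hR_y q)))).const_mul _).add
      ((hasDerivAt_pdx (ha q)).mul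
        ((hasDerivAt_pdx (hu₁ q)).mul (hasDerivAt_pdx (hR₁ q))))).deriv
  have hW : pdy (riemannFluxY b u R) q
      = (1 / 2) * ((pdy R q * pdx u q + R q * pdy (pdx u) q)
          - (pdy u q * pdx R q + u q * pdy (pdx R) q))
        + (pdy b q * (u q * R q) + b q * (pdy u q * R q + u q * pdy R q)) :=
    (((((hasDerivAt_pdy (hR₁ q)).mul (hasDerivAt_pdy (hu_x q))).sub
      ((hasDerivAt_pdy (hu₁ q)).mul (hasDerivAt_pdy (hR_x q)))).const_mul _).add
      ((hasDerivAt_pdy (hb q)).mul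
        ((hasDerivAt_pdy (hu₁ q)).mul (hasDerivAt_pdy (hR₁ q))))).deriv
  have haR : pdx (fun q' => a q' * R q') q = pdx a q * R q + a q * pdx R q :=
    ((hasDerivAt_pdx (ha q)).mul (hasDerivAt_pdx (hR₁ q))).deriv
  have hbR : pdy (fun q' => b q' * R q') q = pdy b q * R q + b q * pdy R q :=
    ((hasDerivAt_pdy (hb q)).mul (hasDerivAt_pdy (hR₁ q))).deriv
  rw [hV, hW, hyperbolicOp, hyperbolicOpAdjoint, haR, hbR, pdx_pdy_comm hu, pdx_pdy_comm hR]
  ring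

theorem integral_riemannFluxX_of_pdy_eq_mul (hu : ContDiff ℝ 1 u) (hR : ContDiff ℝ 1 R)
    {x₀ : ℝ} (hRy : ∀ y, pdy R (x₀, y) = a (x₀, y) * R (x₀, y)) (y₁ y₂ : ℝ) :
    ∫ y in y₁..y₂, riemannFluxX a u R (x₀, y)
      = (1 / 2) * (u (x₀, y₂) * R (x₀, y₂) - u (x₀, y₁) * R (x₀, y₁)) := by
  rw [← integral_pdy_mul_add_mul_pdy hu hR, ← intervalIntegral.integral_const_mul]
  refine intervalIntegral.integral_congr fun y _ => ?_
  simp only [riemannFluxX, hRy]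
  ring

theorem integral_riemannFluxY_of_pdx_eq_mul (hu : ContDiff ℝ 1 u) (hR : ContDiff ℝ 1 R)
    {y₀ : ℝ} (hRx : ∀ x, pdx R (x, y₀) = b (x, y₀) * R (x, y₀)) (x₁ x₂ : ℝ) :
    ∫ x in x₁..x₂, riemannFluxY b u R (x, y₀)
      = (1 / 2) * (u (x₂, y₀) * R (x₂, y₀) - u (x₁, y₀) * R (x₁, y₀)) := by
  rw [← integral_pdx_mul_add_mul_pdx hu hR, ← intervalIntegral.integral_const_mul]
  refine intervalIntegral.integral_congr fun x _ => ?_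
  simp only [riemannFluxY, hRx]
  ring

theorem riemannFluxY_sub_riemannFluxX_mul_of_eq_zero {q : ℝ × ℝ} (hq : u q = 0) (d : ℝ) :
    riemannFluxY b u R q - riemannFluxX a u R q * d
      = (1 / 2) * (R q * (pdx u q - pdy u q * d)) := by
  simp only [riemannFluxX, riemannFluxY, hq]
  ring

end RiemannMethod

theorem riemann_representation_dirichlet_general
    (a b c : ℝ × ℝ → ℝ)
    (ha : ContDiff ℝ 1 a) (hb : ContDiff ℝ 1 b)
    (R : ℝ × ℝ → ℝ × ℝ → ℝ)
    (hRsmooth : ∀ P : ℝ × ℝ, ContDiff ℝ 2 (fun q => R q P))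
    -- (i) the adjoint equation `H* ℜ = 0` in the variables `q = (x, y)`
    (hRadj : ∀ P q : ℝ × ℝ,
      pdy (pdx (fun q' => R q' P)) q
        - pdx (fun q' => a q' * R q' P) q
        - pdy (fun q' => b q' * R q' P) q
        + c q * R q P = 0)
    -- (ii) Goursat data on the vertical characteristic `x = x₀`
    (hRvert : ∀ P : ℝ × ℝ, ∀ y : ℝ,
      R (P.1, y) P = Real.exp (∫ τ in P.2..y, a (P.1, τ)))
    -- (iii) Goursat data on the horizontal characteristic `y = y₀`
    (hRhoriz : ∀ P : ℝ × ℝ, ∀ x : ℝ,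
      R (x, P.2) P = Real.exp (∫ t in P.1..x, b (t, P.2)))
    (s : ℝ → ℝ) (hs : ContDiff ℝ 1 s)
    (hsbij : Function.Bijective s)
    (u : ℝ × ℝ → ℝ) (hu : ContDiff ℝ 2 u)
    (hueq : ∀ q : ℝ × ℝ,
      pdy (pdx u) q + a q * pdx u q + b q * pdy u q + c q * u q = 0)
    (huΓ : ∀ x : ℝ, u (x, s x) = 0) :
    ∀ x₀ y₀ : ℝ,
      u (x₀, y₀) =
        (1 / 2) * ∫ x in (Function.invFun s y₀)..x₀,
          R (x, s x) (x₀, y₀) * (pdx u (x, s x) - pdy u (x, s x) * deriv s x) := by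
  intro x₀ y₀
  set x₁ := Function.invFun s y₀
  have hx₁ : s x₁ = y₀ := Function.rightInverse_invFun hsbij.2 y₀
  have hR := hRsmooth (x₀, y₀)
  have hdiv (q : ℝ × ℝ) : pdx (riemannFluxX a u (R · (x₀, y₀))) q
      + pdy (riemannFluxY b u (R · (x₀, y₀))) q = 0 := by
    rw [pdx_riemannFluxX_add_pdy_riemannFluxY c (ha.differentiable one_ne_zero)
      (hb.differentiable one_ne_zero) hu hR, hyperbolicOp, hyperbolicOpAdjoint, hueq, hRadj]
    ring
  have hgreen := integral_edges_eq_integral_graph_of_divergence_free (x₀ := x₀)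
    (contDiff_riemannFluxX ha hu hR) (contDiff_riemannFluxY hb hu hR) hdiv hs hx₁
  have hR₀ : R (x₀, y₀) (x₀, y₀) = 1 := by simpa using hRvert (x₀, y₀) y₀
  have hu₁ : u (x₁, y₀) = 0 := hx₁ ▸ huΓ x₁
  rw [integral_riemannFluxX_of_pdy_eq_mul (hu.of_le one_le_two) (hR.of_le one_le_two)
      (pdy_eq_mul_of_eq_exp_integral ha.continuous (hRvert (x₀, y₀))),
    integral_riemannFluxY_of_pdx_eq_mul (hu.of_le one_le_two) (hR.of_le one_le_two)
      (pdx_eq_mul_of_eq_exp_integral hb.continuous (hRhoriz (x₀, y₀))),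
    huΓ, hu₁, hR₀] at hgreen
  have hcurve : ∫ x in x₁..x₀, (riemannFluxY b u (R · (x₀, y₀)) (x, s x)
        - riemannFluxX a u (R · (x₀, y₀)) (x, s x) * deriv s x)
      = (1 / 2) * ∫ x in x₁..x₀,
          R (x, s x) (x₀, y₀) * (pdx u (x, s x) - pdy u (x, s x) * deriv s x) := by
    rw [← intervalIntegral.integral_const_mul]
    exact intervalIntegral.integral_congr fun x _ =>
      riemannFluxY_sub_riemannFluxX_mul_of_eq_zero (huΓ x) _
  linarith

/-- Riemann's representation formula for a solution of the hyperbolic equation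
`u_{xy} + a u_x + b u_y + c u = 0` which vanishes on the non-characteristic curve
`Γ = {(x, s(x))}`.  Here `R q P` is the Riemann function `ℜ(q; P)` of `H`. -/
theorem riemann_representation_dirichlet
    (a b c : ℝ × ℝ → ℝ)
    (ha : ContDiff ℝ 1 a) (hb : ContDiff ℝ 1 b) (hc : ContDiff ℝ 1 c)
    (R : ℝ × ℝ → ℝ × ℝ → ℝ)
    (hRsmooth : ∀ P : ℝ × ℝ, ContDiff ℝ 2 (fun q => R q P))
    -- (i) the adjoint equation `H* ℜ = 0` in the variables `q = (x, y)`
    (hRadj : ∀ P q : ℝ × ℝ,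
      pdy (pdx (fun q' => R q' P)) q
        - pdx (fun q' => a q' * R q' P) q
        - pdy (fun q' => b q' * R q' P) q
        + c q * R q P = 0)
    -- (ii) Goursat data on the vertical characteristic `x = x₀`
    (hRvert : ∀ P : ℝ × ℝ, ∀ y : ℝ,
      R (P.1, y) P = Real.exp (∫ τ in P.2..y, a (P.1, τ)))
    -- (iii) Goursat data on the horizontal characteristic `y = y₀`
    (hRhoriz : ∀ P : ℝ × ℝ, ∀ x : ℝ,
      R (x, P.2) P = Real.exp (∫ t in P.1..x, b (t, P.2)))
    (s : ℝ → ℝ) (hs : ContDiff ℝ 1 s) (hsdec : StrictAnti s)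
    (hsbij : Function.Bijective s)
    (u : ℝ × ℝ → ℝ) (hu : ContDiff ℝ 2 u)
    (hueq : ∀ q : ℝ × ℝ,
      pdy (pdx u) q + a q * pdx u q + b q * pdy u q + c q * u q = 0)
    (huΓ : ∀ x : ℝ, u (x, s x) = 0) :
    ∀ x₀ y₀ : ℝ,
      u (x₀, y₀) =
        (1 / 2) * ∫ x in (Function.invFun s y₀)..x₀,
          R (x, s x) (x₀, y₀) * (pdx u (x, s x) - pdy u (x, s x) * deriv s x) :=
  riemann_representation_dirichlet_general a b c ha hb R hRsmooth hRadj hRvert hRhoriz s hs hsbij u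
    hu hueq huΓ
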